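/- If the boundary conditions R(-x^ρ(a); x(b)) + S(P^ρ(a)x^∇(a); P(b)x^Δ(b)) = 0 are self-adjoint (i.e., S R* = R S* and rank(R,S) = 2d), then the operator ℓx = ω⁻¹[-(P x^Δ)^∇ + Q x] satisfies ⟨ℓx, y⟩ = ⟨x, ℓy⟩ for all x, y satisfying the boundary conditions, where ⟨x,y⟩ = ∑_{n=0}^{N-1} y*(n)ω(n)x(n)μρ(n). -/

import Mathlib

open Matrix ComplexOrder

lemma aux_star_sum_elim {d : ℕ} (a b : Fin d → ℂ) :
    star (Sum.elim a b) = Sum.elim (star a) (star b) := by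
  funext i; cases i <;> rfl

lemma aux_ker_bc (d : ℕ) (R S : Matrix (Fin d ⊕ Fin d) (Fin d ⊕ Fin d) ℂ)
    (hrank : (Matrix.fromCols R S).rank = 2 * d) (hSA : S * Rᴴ = R * Sᴴ)
    (U V : Fin d ⊕ Fin d → ℂ) (h : R *ᵥ U + S *ᵥ V = 0) :
    ∃ w, Sᴴ *ᵥ w = U ∧ -(Rᴴ *ᵥ w) = V := by
  set T := Matrix.fromCols R S with hT
  set M := Matrix.fromRows Sᴴ (-Rᴴ) with hM
  have hTM : T * M = 0 := by
    rw [hT, hM, fromCols_mul_fromRows, Matrix.mul_neg, hSA, add_neg_cancel]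
  have hle : LinearMap.range M.mulVecLin ≤ LinearMap.ker T.mulVecLin := by
    rintro _ ⟨w, rfl⟩
    simp only [LinearMap.mem_ker, mulVecLin_apply, mulVec_mulVec, hTM, zero_mulVec]
  have hMrank : M.rank = 2 * d := by
    have h1 : Mᴴ = Matrix.fromCols S (-R) := by
      rw [hM, conjTranspose_fromRows_eq_fromCols_conjTranspose,
        conjTranspose_conjTranspose, conjTranspose_neg, conjTranspose_conjTranspose]
    set e : Matrix (Fin d ⊕ Fin d) (Fin d ⊕ Fin d) ℂ := 1 with he
    have hJ : T * Matrix.fromBlocks 0 (-e) e 0 = Matrix.fromCols S (-R) := by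
      rw [hT, fromCols_mul_fromBlocks]
      simp [he, Matrix.mul_neg]
    have hJu : IsUnit (Matrix.fromBlocks 0 (-e) e
        (0 : Matrix (Fin d ⊕ Fin d) (Fin d ⊕ Fin d) ℂ)).det := by
      refine Matrix.isUnit_det_of_right_inverse (B := Matrix.fromBlocks 0 e (-e) 0) ?_
      rw [Matrix.fromBlocks_multiply, he]
      norm_num
    rw [← Matrix.rank_conjTranspose, h1, ← hJ,
      Matrix.rank_mul_eq_left_of_isUnit_det _ _ hJu]
    exact hrank
  have hcard : Module.finrank ℂ ((Fin d ⊕ Fin d) ⊕ (Fin d ⊕ Fin d) → ℂ) = 4 * d := by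
    simp [Module.finrank_pi]; ring
  have hrn := LinearMap.finrank_range_add_finrank_ker T.mulVecLin
  rw [hcard] at hrn
  have hrange : Module.finrank ℂ (LinearMap.range T.mulVecLin) = 2 * d := hrank
  have hker : Module.finrank ℂ (LinearMap.ker T.mulVecLin) = 2 * d := by omega
  have heq : LinearMap.range M.mulVecLin = LinearMap.ker T.mulVecLin := by
    apply Submodule.eq_of_le_of_finrank_eq hle
    rw [hker]; exact hMrank
  have hmem : Sum.elim U V ∈ LinearMap.ker T.mulVecLin := by
    simp only [LinearMap.mem_ker, mulVecLin_apply, hT, fromCols_mulVec_sumElim]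
    exact h
  rw [← heq] at hmem
  obtain ⟨w, hw⟩ := hmem
  have h2 : Sum.elim (Sᴴ *ᵥ w) (-(Rᴴ *ᵥ w)) = Sum.elim U V := by
    rw [← Matrix.neg_mulVec, ← Matrix.fromRows_mulVec, ← hM]
    exact hw
  exact ⟨w, funext fun i => congrFun h2 (Sum.inl i), funext fun i => congrFun h2 (Sum.inr i)⟩

/-- If the boundary conditions
`R (-x^ρ(a); x(b)) + S (P^ρ(a)x^∇(a); P(b)x^Δ(b)) = 0` are self-adjoint
(`S R* = R S*` and `rank (R,S) = 2d`), then the operator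
`ℓx = ω⁻¹[-(P x^Δ)^∇ + Q x]` is symmetric: `⟨ℓx, y⟩ = ⟨x, ℓy⟩` for all `x, y`
satisfying the boundary conditions. -/
theorem operator_symmetric_of_selfadjoint_bc (d N : ℕ) (hN : 2 ≤ N) (t : ℤ → ℝ)
    (ht : ∀ n : ℤ, t (n - 1) < t n)
    (P Q ω : ℤ → Matrix (Fin d) (Fin d) ℂ)
    (hP : ∀ n : ℤ, -1 ≤ n → n ≤ (N : ℤ) - 1 → (P n).IsHermitian)
    (hPa : IsUnit (P (-1))) (hPb : IsUnit (P ((N : ℤ) - 1)))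
    (hQ : ∀ n : ℤ, 0 ≤ n → n ≤ (N : ℤ) - 1 → (Q n).IsHermitian)
    (hω : ∀ n : ℤ, 0 ≤ n → n ≤ (N : ℤ) - 1 → (ω n).PosDef)
    (R S : Matrix (Fin d ⊕ Fin d) (Fin d ⊕ Fin d) ℂ)
    (hrank : (Matrix.fromCols R S).rank = 2 * d)
    (hSA : S * Rᴴ = R * Sᴴ)
    (x y : ℤ → (Fin d → ℂ)) :
    let μσ : ℤ → ℂ := fun n => Complex.ofReal (t (n + 1) - t n)
    let μρ : ℤ → ℂ := fun n => Complex.ofReal (t n - t (n - 1))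
    let del : (ℤ → (Fin d → ℂ)) → ℤ → (Fin d → ℂ) :=
      fun g n => (μσ n)⁻¹ • (g (n + 1) - g n)
    let nab : (ℤ → (Fin d → ℂ)) → ℤ → (Fin d → ℂ) :=
      fun g n => (μρ n)⁻¹ • (g n - g (n - 1))
    let ell : (ℤ → (Fin d → ℂ)) → ℤ → (Fin d → ℂ) :=
      fun g n => (ω n)⁻¹ *ᵥ
        (-((μρ n)⁻¹ • (P n *ᵥ del g n - P (n - 1) *ᵥ del g (n - 1))) + Q n *ᵥ g n)
    let ip : (ℤ → (Fin d → ℂ)) → (ℤ → (Fin d → ℂ)) → ℂ :=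
      fun g h => ∑ n ∈ Finset.range N, (star (h (n : ℤ)) ⬝ᵥ (ω (n : ℤ) *ᵥ g (n : ℤ))) * μρ (n : ℤ)
    let bc : (ℤ → (Fin d → ℂ)) → Prop :=
      fun g => R *ᵥ Sum.elim (-(g (-1))) (g ((N : ℤ) - 1)) +
        S *ᵥ Sum.elim (P (-1) *ᵥ nab g 0) (P ((N : ℤ) - 1) *ᵥ del g ((N : ℤ) - 1)) = 0
    bc x → bc y → ip (ell x) y = ip x (ell y) := by
  intro μσ μρ del nab ell ip bc hx hy
  classical
  have hμρ0 : ∀ n : ℤ, μρ n ≠ 0 := fun n => by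
    simp only [μρ, ne_eq, Complex.ofReal_eq_zero]
    exact ne_of_gt (sub_pos.mpr (ht n))
  have hμσstar : ∀ n : ℤ, star ((μσ n)⁻¹) = (μσ n)⁻¹ := fun n => by
    simp [μσ, ← Complex.ofReal_inv, Complex.star_def, Complex.conj_ofReal]
  have hμρstar : ∀ n : ℤ, star ((μρ n)⁻¹) = (μρ n)⁻¹ := fun n => by
    simp [μρ, ← Complex.ofReal_inv, Complex.star_def, Complex.conj_ofReal]
  have hωdet : ∀ n : ℤ, 0 ≤ n → n ≤ (N : ℤ) - 1 → IsUnit (ω n).det := fun n h1 h2 =>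
    (Matrix.isUnit_iff_isUnit_det _).mp (hω n h1 h2).isUnit
  set Dx : ℤ → (Fin d → ℂ) :=
    fun n => P n *ᵥ del x n - P (n - 1) *ᵥ del x (n - 1) with hDx
  set Dy : ℤ → (Fin d → ℂ) :=
    fun n => P n *ᵥ del y n - P (n - 1) *ᵥ del y (n - 1) with hDy
  -- Step A : first summand
  have hterm1 : ∀ n : ℤ, 0 ≤ n → n ≤ (N : ℤ) - 1 →
      (star (y n) ⬝ᵥ (ω n *ᵥ ell x n)) * μρ n
        = -(star (y n) ⬝ᵥ Dx n) + (star (y n) ⬝ᵥ (Q n *ᵥ x n)) * μρ n := by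
    intro n h1 h2
    have hv : ω n *ᵥ ell x n = -((μρ n)⁻¹ • Dx n) + Q n *ᵥ x n := by
      simp only [ell, Matrix.mulVec_mulVec, Matrix.mul_nonsing_inv _ (hωdet n h1 h2),
        Matrix.one_mulVec, hDx]
    have hc : ∀ a b : ℂ, (-((μρ n)⁻¹ * a) + b) * μρ n = -a + b * μρ n := by
      intro a b
      have h := hμρ0 n
      field_simp
    rw [hv, dotProduct_add, dotProduct_neg, dotProduct_smul, smul_eq_mul, hc]
  -- Step B : second summand
  have hterm2 : ∀ n : ℤ, 0 ≤ n → n ≤ (N : ℤ) - 1 →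
      (star (ell y n) ⬝ᵥ (ω n *ᵥ x n)) * μρ n
        = -(star (Dy n) ⬝ᵥ x n) + (star (y n) ⬝ᵥ (Q n *ᵥ x n)) * μρ n := by
    intro n h1 h2
    have hωh : (ω n)ᴴ = ω n := (hω n h1 h2).1
    have hQh : (Q n)ᴴ = Q n := hQ n h1 h2
    have hv : star (ell y n) ⬝ᵥ (ω n *ᵥ x n)
        = star (-((μρ n)⁻¹ • Dy n) + Q n *ᵥ y n) ⬝ᵥ x n := by
      simp only [ell, hDy]
      rw [dotProduct_mulVec, star_mulVec, Matrix.vecMul_vecMul,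
        Matrix.conjTranspose_nonsing_inv, hωh,
        Matrix.nonsing_inv_mul _ (hωdet n h1 h2), Matrix.vecMul_one]
    rw [hv, star_add, star_neg, star_smul, hμρstar n, add_dotProduct, neg_dotProduct,
      smul_dotProduct, smul_eq_mul, star_mulVec, hQh, ← dotProduct_mulVec]
    have hc : ∀ a b : ℂ, (-((μρ n)⁻¹ * a) + b) * μρ n = -a + b * μρ n := by
      intro a b
      have h := hμρ0 n
      field_simp
    rw [hc]
  -- Step C : Lagrange identity and telescoping
  set W : ℤ → ℂ :=
    fun m => star (y m) ⬝ᵥ (P m *ᵥ del x m) - star (P m *ᵥ del y m) ⬝ᵥ x m with hW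
  have hlag : ∀ n : ℤ, 0 ≤ n → n ≤ (N : ℤ) - 1 →
      star (y n) ⬝ᵥ Dx n - star (Dy n) ⬝ᵥ x n = W n - W (n - 1) := by
    intro n h1 h2
    have hPh : (P (n - 1))ᴴ = P (n - 1) := hP (n - 1) (by omega) (by omega)
    have hn : n - 1 + 1 = n := by ring
    have key : star (y n - y (n - 1)) ⬝ᵥ (P (n - 1) *ᵥ del x (n - 1))
        = star (P (n - 1) *ᵥ del y (n - 1)) ⬝ᵥ (x n - x (n - 1)) := by
      simp only [del, hn]
      rw [Matrix.mulVec_smul, dotProduct_smul, smul_eq_mul,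
        Matrix.mulVec_smul, star_smul, hμσstar, smul_dotProduct, smul_eq_mul,
        star_mulVec, hPh, ← dotProduct_mulVec]
    simp only [hDx, hDy, hW]
    simp only [dotProduct_sub, sub_dotProduct, star_sub] at key ⊢
    linear_combination -key
  have htel : ∑ n ∈ Finset.range N,
      (star (y (n : ℤ)) ⬝ᵥ Dx (n : ℤ) - star (Dy (n : ℤ)) ⬝ᵥ x (n : ℤ))
      = W ((N : ℤ) - 1) - W (-1) := by
    have hcong : ∀ n ∈ Finset.range N,
        star (y (n : ℤ)) ⬝ᵥ Dx (n : ℤ) - star (Dy (n : ℤ)) ⬝ᵥ x (n : ℤ)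
          = (fun k : ℕ => W ((k : ℤ) - 1)) (n + 1) - (fun k : ℕ => W ((k : ℤ) - 1)) n := by
      intro n hn
      rw [Finset.mem_range] at hn
      have h := hlag (n : ℤ) (by positivity) (by omega)
      have : ((n : ℤ) + 1 - 1) = (n : ℤ) := by ring
      simpa [this] using h
    rw [Finset.sum_congr rfl hcong]
    have h2 := Finset.sum_range_sub (fun k : ℕ => W ((k : ℤ) - 1)) N
    rw [h2]
    norm_num
  -- Step D : boundary term vanishes
  have hbd : W ((N : ℤ) - 1) - W (-1) = 0 := by
    obtain ⟨wx, hwx1, hwx2⟩ := aux_ker_bc d R S hrank hSA _ _ hx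
    obtain ⟨wy, hwy1, hwy2⟩ := aux_ker_bc d R S hrank hSA _ _ hy
    have hdnx : del x (-1) = nab x 0 := by
      simp only [del, nab, μσ, μρ]; norm_num
    have hdny : del y (-1) = nab y 0 := by
      simp only [del, nab, μσ, μρ]; norm_num
    have hUy : star (Sum.elim (-(y (-1))) (y ((N : ℤ) - 1))) ⬝ᵥ
          Sum.elim (P (-1) *ᵥ nab x 0) (P ((N : ℤ) - 1) *ᵥ del x ((N : ℤ) - 1))
        - star (Sum.elim (P (-1) *ᵥ nab y 0) (P ((N : ℤ) - 1) *ᵥ del y ((N : ℤ) - 1))) ⬝ᵥ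
          Sum.elim (-(x (-1))) (x ((N : ℤ) - 1)) = 0 := by
      rw [← hwx1, ← hwx2, ← hwy1, ← hwy2]
      rw [star_neg, star_mulVec, star_mulVec, conjTranspose_conjTranspose,
        conjTranspose_conjTranspose, dotProduct_neg, neg_dotProduct,
        dotProduct_mulVec, dotProduct_mulVec, Matrix.vecMul_vecMul, Matrix.vecMul_vecMul, hSA]
      ring
    rw [aux_star_sum_elim, aux_star_sum_elim, sumElim_dotProduct_sumElim,
      sumElim_dotProduct_sumElim] at hUy
    simp only [hW, hdnx, hdny] at *
    simp only [star_neg, neg_dotProduct, dotProduct_neg] at hUy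
    linear_combination hUy
  -- Assemble
  have hsum : ip (ell x) y - ip x (ell y)
      = -(∑ n ∈ Finset.range N,
          (star (y (n : ℤ)) ⬝ᵥ Dx (n : ℤ) - star (Dy (n : ℤ)) ⬝ᵥ x (n : ℤ))) := by
    simp only [ip, ← Finset.sum_sub_distrib, ← Finset.sum_neg_distrib]
    apply Finset.sum_congr rfl
    intro n hn
    rw [Finset.mem_range] at hn
    rw [hterm1 (n : ℤ) (by positivity) (by omega), hterm2 (n : ℤ) (by positivity) (by omega)]
    ring
  rw [htel, hbd, neg_zero] at hsum
  exact sub_eq_zero.mp hsum
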